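/- Let n ≥ 1 be a natural number and equip E = (Fin n → ℂ) with the supremum norm. Let γ be a nonzero real number, define F : E → E by (F x)(i) = −γ·|x i|²·(x i), let A : E ≃L E be a continuous linear equivalence (with inverse A⁻¹), let s ≥ 0 and M ≥ 0 be real numbers, and let G : E → E satisfy ‖G φ‖ ≤ M + (|γ| / (2‖A‖·‖A⁻¹‖))·‖φ‖³ for all φ ∈ E. Then there exists R > 0 such that for every φ ∈ E with ‖φ‖ = R, one has ‖A⁻¹(G φ − s·φ)‖ < ‖φ − A⁻¹(F φ)‖. -/

import Mathlib

/-!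
Since `‖F φ‖ = |γ| ‖φ‖³` in the sup norm and `A⁻¹` shrinks norms by at most the factor `‖A‖`,
the term `A⁻¹(F φ)` has norm at least `|γ| ‖φ‖³ / ‖A‖`, whereas the bound on `G` only allows
`‖A⁻¹(G φ - s φ)‖ ≤ ‖A⁻¹‖ (M + |s| ‖φ‖) + |γ| ‖φ‖³ / (2 ‖A‖)`. The cubic term wins by a factor two,
so on a large enough sphere it absorbs all lower-order terms.
-/

lemma exists_pos_add_mul_lt_mul_pow_three (α β : ℝ) {c : ℝ} (hc : 0 < c) :
    ∃ R > 0, α + β * R < c * R ^ 3 := by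
  set R := max 1 ((|α| + |β| + 1) / c)
  have hR : 1 ≤ R := le_max_left _ _
  have hcR : |α| + |β| + 1 ≤ c * R := (div_le_iff₀' hc).1 (le_max_right _ _)
  refine ⟨R, by positivity, ?_⟩
  calc α + β * R ≤ |α| * R + |β| * R := by
        gcongr
        · nlinarith [le_abs_self α, abs_nonneg α]
        · exact le_abs_self β
    _ < (c * R) * R := by nlinarith
    _ ≤ (c * R) * R * R := le_mul_of_one_le_right (by positivity) hR
    _ = c * R ^ 3 := by ring

lemma norm_smul_norm_sq_pi {ι E : Type*} [Fintype ι] [SeminormedAddCommGroup E]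
    [NormedSpace ℝ E] (γ : ℝ) (φ : ι → E) :
    ‖fun i => (γ * ‖φ i‖ ^ 2 : ℝ) • φ i‖ = |γ| * ‖φ‖ ^ 3 := by
  have hcoord (i : ι) : ‖(γ * ‖φ i‖ ^ 2 : ℝ) • φ i‖ = |γ| * ‖φ i‖ ^ 3 := by
    rw [norm_smul, Real.norm_eq_abs, abs_mul, abs_of_nonneg (sq_nonneg ‖φ i‖)]
    ring
  rcases isEmpty_or_nonempty ι with hι | hι
  · simp [Subsingleton.elim φ 0]
    exact norm_zero
  obtain ⟨⟨i, hi⟩, -⟩ := IsGreatest.pi_norm φ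
  refine le_antisymm ((pi_norm_le_iff_of_nonneg (by positivity)).2 fun j => ?_) ?_
  · rw [hcoord]
    gcongr
    exact norm_le_pi_norm φ j
  · rw [← hi, ← hcoord]
    exact norm_le_pi_norm (fun i => (γ * ‖φ i‖ ^ 2 : ℝ) • φ i) i

namespace ContinuousLinearEquiv

variable {𝕜 E V : Type*} [NontriviallyNormedField 𝕜] [NormedAddCommGroup E] [NormedSpace 𝕜 E]
  [NormedAddCommGroup V] [NormedSpace 𝕜 V]

lemma norm_le_norm_mul_norm_symm_apply (A : E ≃L[𝕜] V) (y : V) :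
    ‖y‖ ≤ ‖(A : E →L[𝕜] V)‖ * ‖A.symm y‖ := by
  simpa using (A : E →L[𝕜] V).le_opNorm (A.symm y)

theorem exists_sphere_norm_symm_lt_norm_sub_symm [Nontrivial E] (A : E ≃L[𝕜] V)
    (F H : E → V) {κ M s : ℝ} (hκ : 0 < κ) (hF : ∀ φ, κ * ‖φ‖ ^ 3 ≤ ‖F φ‖)
    (hH : ∀ φ, ‖H φ‖ ≤ M + s * ‖φ‖ +
      κ / (2 * ‖(A : E →L[𝕜] V)‖ * ‖(A.symm : V →L[𝕜] E)‖) * ‖φ‖ ^ 3) :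
    ∃ R > 0, ∀ φ, ‖φ‖ = R → ‖A.symm (H φ)‖ < ‖φ - A.symm (F φ)‖ := by
  set a := ‖(A : E →L[𝕜] V)‖
  set b := ‖(A.symm : V →L[𝕜] E)‖
  have ha : 0 < a := A.norm_pos
  have hb : 0 < b := A.norm_symm_pos
  obtain ⟨R, hR, hcubic⟩ :=
    exists_pos_add_mul_lt_mul_pow_three (b * M) (b * s + 1) (show 0 < κ / (2 * a) by positivity)
  refine ⟨R, hR, fun φ hφ => ?_⟩
  have hFφ : κ / a * R ^ 3 ≤ ‖A.symm (F φ)‖ := by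
    rw [div_mul_eq_mul_div, div_le_iff₀' ha, ← hφ]
    exact (hF φ).trans (A.norm_le_norm_mul_norm_symm_apply _)
  calc ‖A.symm (H φ)‖ ≤ b * ‖H φ‖ := (A.symm : V →L[𝕜] E).le_opNorm _
    _ ≤ b * (M + s * R + κ / (2 * a * b) * R ^ 3) := by
        rw [← hφ]
        exact mul_le_mul_of_nonneg_left (hH φ) hb.le
    _ = b * M + (b * s + 1) * R + κ / (2 * a) * R ^ 3 - R := by
        field_simp
        ring
    _ < κ / a * R ^ 3 - R := by
        have : κ / a = 2 * (κ / (2 * a)) := by field_simp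
        rw [this]
        linarith
    _ ≤ ‖A.symm (F φ)‖ - ‖φ‖ := by rw [hφ]; linarith
    _ ≤ ‖φ - A.symm (F φ)‖ := by
        rw [norm_sub_rev]
        exact norm_sub_norm_le _ _

end ContinuousLinearEquiv

theorem homotopy_estimate_general (n : ℕ) (hn : 1 ≤ n) (γ : ℝ) (hγ : γ ≠ 0)
    (A : (Fin n → ℂ) ≃L[ℂ] (Fin n → ℂ)) (s M : ℝ)
    (G : (Fin n → ℂ) → (Fin n → ℂ))
    (hG : ∀ φ : Fin n → ℂ, ‖G φ‖ ≤ M +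
      (|γ| / (2 * ‖(A : (Fin n → ℂ) →L[ℂ] (Fin n → ℂ))‖ *
        ‖(A.symm : (Fin n → ℂ) →L[ℂ] (Fin n → ℂ))‖)) * ‖φ‖ ^ 3) :
    ∃ R > (0 : ℝ), ∀ φ : Fin n → ℂ, ‖φ‖ = R →
      ‖A.symm (G φ - s • φ)‖ <
        ‖φ - A.symm (fun i : Fin n => (-γ * ‖φ i‖ ^ 2 : ℝ) • φ i)‖ := by
  have : NeZero n := ⟨by omega⟩
  refine A.exists_sphere_norm_symm_lt_norm_sub_symm _ (fun φ => G φ - s • φ) (M := M) (s := ‖s‖)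
    (abs_pos.2 hγ) (fun φ => ?_) (fun φ => ?_)
  · rw [norm_smul_norm_sq_pi, abs_neg]
  · calc ‖G φ - s • φ‖ ≤ ‖G φ‖ + ‖s‖ * ‖φ‖ := by
          rw [← norm_smul]
          exact norm_sub_le _ _
      _ ≤ _ := by linarith [hG φ]

/-- Key homotopy estimate: if G has the subcubic-type bound
‖G φ‖ ≤ M + (|γ|/(2‖A‖‖A⁻¹‖))‖φ‖³, then there is a radius R > 0 such that on the
sphere ‖φ‖ = R one has ‖A⁻¹(G φ − s φ)‖ < ‖φ − A⁻¹(F φ)‖, where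
(F φ)(i) = −γ|φ i|²(φ i). -/
theorem homotopy_estimate (n : ℕ) (hn : 1 ≤ n) (γ : ℝ) (hγ : γ ≠ 0)
    (A : (Fin n → ℂ) ≃L[ℂ] (Fin n → ℂ)) (s M : ℝ) (hs : 0 ≤ s) (hM : 0 ≤ M)
    (G : (Fin n → ℂ) → (Fin n → ℂ))
    (hG : ∀ φ : Fin n → ℂ, ‖G φ‖ ≤ M +
      (|γ| / (2 * ‖(A : (Fin n → ℂ) →L[ℂ] (Fin n → ℂ))‖ *
        ‖(A.symm : (Fin n → ℂ) →L[ℂ] (Fin n → ℂ))‖)) * ‖φ‖ ^ 3) :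
    ∃ R > (0 : ℝ), ∀ φ : Fin n → ℂ, ‖φ‖ = R →
      ‖A.symm (G φ - s • φ)‖ <
        ‖φ - A.symm (fun i : Fin n => (-γ * ‖φ i‖ ^ 2 : ℝ) • φ i)‖ :=
  homotopy_estimate_general n hn γ hγ A s M G hG
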